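/- arXiv:1601.01858 — 2 statements merged into one kernel-verified Lean document; each statement's English description precedes it below -/
import Mathlib

section
/- Let R₁ > 0, R₂ > 0 be reals and let c₁, c₂ be points of the Euclidean plane ℝ² with d = dist(c₁, c₂) satisfying |R₁ − R₂| < d < R₁ + R₂. Then the two-dimensional Lebesgue measure of the intersection of the closed discs B(c₁, R₁) and B(c₂, R₂) equals R₁²·arccos((d² + R₁² − R₂²)/(2·d·R₁)) + R₂²·arccos((d² + R₂² − R₁²)/(2·d·R₂)) − (1/2)·√((−d + R₁ + R₂)·(d + R₁ − R₂)·(d − R₁ + R₂)·(d + R₁ + R₂)). (This is the area lens(M₁, M₂) of the lens formed by the intersecting backhaul disc and inner macro-exclusion disc that appears in Case (B) of the joint pdf Lemmas.) -/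
/-!
Once a measure-preserving isometry moves the centres to `0` and `(d, 0)`, the vertical slice of
the lens over `x` is a segment of length `2 √(min (R₁² - x²) (R₂² - (x - d)²))`. The common chord
lies on the line `x = x₀ = (d² + R₁² - R₂²) / (2d)`, which splits the lens into two circular
segments; a segment's area `R² arccos (h / R) - h √(R² - h²)` is the integral of `2 √(R² - x²)`
from `h` to `R`.
-/

open Real MeasureTheory Set Metric

-- the area of `{(x, y) | x² + y² ≤ R², h ≤ x}` for `-R ≤ h ≤ R`
noncomputable def circularSegmentArea (R h : ℝ) : ℝ :=
  R ^ 2 * arccos (h / R) - h * √(R ^ 2 - h ^ 2)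

theorem hasDerivAt_mul_sqrt_sq_sub_sq_sub_mul_arccos {R x : ℝ} (hR : 0 < R)
    (hx : x ∈ Ioo (-R) R) :
    HasDerivAt (fun t => t * √(R ^ 2 - t ^ 2) - R ^ 2 * arccos (t / R))
      (2 * √(R ^ 2 - x ^ 2)) x := by
  obtain ⟨hx₁, hx₂⟩ := hx
  have hpos : 0 < R ^ 2 - x ^ 2 := by nlinarith
  have hsqrt : HasDerivAt (fun t => √(R ^ 2 - t ^ 2)) (-(2 * x) / (2 * √(R ^ 2 - x ^ 2))) x := by
    simpa using ((hasDerivAt_pow 2 x).const_sub (R ^ 2)).sqrt hpos.ne'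
  have harccos : HasDerivAt (fun t => arccos (t / R)) (-(1 / √(1 - (x / R) ^ 2)) * (1 / R)) x :=
    (hasDerivAt_arccos (by rw [ne_eq, div_eq_iff hR.ne']; linarith)
      (by rw [ne_eq, div_eq_iff hR.ne']; linarith)).comp x ((hasDerivAt_id' x).div_const R)
  refine (((hasDerivAt_id' x).mul hsqrt).sub (harccos.const_mul (R ^ 2))).congr_deriv ?_
  have hroot : √(1 - (x / R) ^ 2) = √(R ^ 2 - x ^ 2) / R := by
    rw [← sqrt_sq hR.le, ← sqrt_div' _ (sq_nonneg R), sqrt_sq hR.le]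
    congr 1
    field_simp
  have hs := sq_sqrt hpos.le
  rw [hroot]
  field_simp
  linear_combination -hs

theorem integral_circularSegmentArea {R h : ℝ} (hR : 0 < R) (hh : h ∈ Icc (-R) R) :
    ∫ x in h..R, 2 * √(R ^ 2 - x ^ 2) = circularSegmentArea R h := by
  have hcont : Continuous fun t => t * √(R ^ 2 - t ^ 2) - R ^ 2 * arccos (t / R) := by fun_prop
  rw [intervalIntegral.integral_eq_sub_of_hasDerivAt_of_le hh.2 hcont.continuousOn
    (fun x hx => hasDerivAt_mul_sqrt_sq_sub_sq_sub_mul_arccos hR ⟨hh.1.trans_lt hx.1, hx.2⟩)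
    ((by fun_prop : Continuous _).intervalIntegrable _ _)]
  simp [circularSegmentArea, div_self hR.ne']

noncomputable def lensArea (R₁ R₂ d : ℝ) : ℝ :=
  R₁ ^ 2 * arccos ((d ^ 2 + R₁ ^ 2 - R₂ ^ 2) / (2 * d * R₁))
    + R₂ ^ 2 * arccos ((d ^ 2 + R₂ ^ 2 - R₁ ^ 2) / (2 * d * R₂))
    - (1 / 2) * √((-d + R₁ + R₂) * (d + R₁ - R₂) * (d - R₁ + R₂) * (d + R₁ + R₂))

theorem lensArea_eq_circularSegmentArea_add {R₁ R₂ d : ℝ} (hd : 0 < d) :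
    lensArea R₁ R₂ d = circularSegmentArea R₁ ((d ^ 2 + R₁ ^ 2 - R₂ ^ 2) / (2 * d))
      + circularSegmentArea R₂ ((d ^ 2 + R₂ ^ 2 - R₁ ^ 2) / (2 * d)) := by
  set s := (-d + R₁ + R₂) * (d + R₁ - R₂) * (d - R₁ + R₂) * (d + R₁ + R₂)
  have hchord₁ : R₁ ^ 2 - ((d ^ 2 + R₁ ^ 2 - R₂ ^ 2) / (2 * d)) ^ 2 = s / (2 * d) ^ 2 := by
    field_simp; ring
  have hchord₂ : R₂ ^ 2 - ((d ^ 2 + R₂ ^ 2 - R₁ ^ 2) / (2 * d)) ^ 2 = s / (2 * d) ^ 2 := by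
    field_simp; ring
  rw [circularSegmentArea, circularSegmentArea, hchord₁, hchord₂, sqrt_div' _ (sq_nonneg _),
    sqrt_sq (by positivity), lensArea]
  field_simp
  ring

theorem integral_two_mul_sqrt_min_eq_lensArea {R₁ R₂ d : ℝ} (hR₁ : 0 < R₁) (hR₂ : 0 < R₂)
    (hlow : |R₁ - R₂| < d) (hhigh : d < R₁ + R₂) :
    ∫ x in (d - R₂)..R₁, 2 * √(min (R₁ ^ 2 - x ^ 2) (R₂ ^ 2 - (x - d) ^ 2))
      = lensArea R₁ R₂ d := by
  have hd : 0 < d := (abs_nonneg _).trans_lt hlow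
  obtain ⟨hlow₁, hlow₂⟩ := abs_lt.1 hlow
  set x₀ := (d ^ 2 + R₁ ^ 2 - R₂ ^ 2) / (2 * d) with hx₀
  have hdx₀ : d - x₀ = (d ^ 2 + R₂ ^ 2 - R₁ ^ 2) / (2 * d) := by rw [hx₀]; field_simp; ring
  have hdiff : ∀ x, (R₁ ^ 2 - x ^ 2) - (R₂ ^ 2 - (x - d) ^ 2) = 2 * d * (x₀ - x) := by
    intro x; rw [hx₀]; field_simp; ring
  have hx₀_mem : x₀ ∈ Icc (-R₁) R₁ := by
    rw [hx₀, mem_Icc, le_div_iff₀ (by positivity), div_le_iff₀ (by positivity)]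
    constructor <;> nlinarith
  have hdx₀_mem : d - x₀ ∈ Icc (-R₂) R₂ := by
    rw [hdx₀, mem_Icc, le_div_iff₀ (by positivity), div_le_iff₀ (by positivity)]
    constructor <;> nlinarith
  have hleft : ∫ x in (d - R₂)..x₀, 2 * √(min (R₁ ^ 2 - x ^ 2) (R₂ ^ 2 - (x - d) ^ 2))
      = circularSegmentArea R₂ (d - x₀) := by
    rw [← integral_circularSegmentArea hR₂ hdx₀_mem, ← sub_sub_cancel d R₂,
      ← intervalIntegral.integral_comp_sub_left, sub_sub_cancel]
    refine intervalIntegral.integral_congr fun x hx => ?_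
    rw [uIcc_of_le (by linarith [hdx₀_mem.2])] at hx
    rw [min_eq_right (by nlinarith [hdiff x, hx.2]), ← neg_sub d x, neg_sq]
  have hright : ∫ x in x₀..R₁, 2 * √(min (R₁ ^ 2 - x ^ 2) (R₂ ^ 2 - (x - d) ^ 2))
      = circularSegmentArea R₁ x₀ := by
    rw [← integral_circularSegmentArea hR₁ hx₀_mem]
    refine intervalIntegral.integral_congr fun x hx => ?_
    rw [uIcc_of_le hx₀_mem.2] at hx
    rw [min_eq_left (by nlinarith [hdiff x, hx.1])]
  have hcont : Continuous fun x => 2 * √(min (R₁ ^ 2 - x ^ 2) (R₂ ^ 2 - (x - d) ^ 2)) := by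
    fun_prop
  rw [← intervalIntegral.integral_add_adjacent_intervals (b := x₀)
      (hcont.intervalIntegrable _ _) (hcont.intervalIntegrable _ _),
    hleft, hright, lensArea_eq_circularSegmentArea_add hd, hdx₀, add_comm]

theorem volume_setOf_sq_le (m : ℝ) : volume {y : ℝ | y ^ 2 ≤ m} = ENNReal.ofReal (2 * √m) := by
  rcases le_or_gt 0 m with hm | hm
  · have : {y : ℝ | y ^ 2 ≤ m} = Icc (-√m) √m := by ext y; exact sq_le hm
    rw [this, volume_Icc, sub_neg_eq_add, two_mul]
  · have : {y : ℝ | y ^ 2 ≤ m} = ∅ :=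
      eq_empty_of_forall_notMem fun y hy => (hm.trans_le (sq_nonneg y)).not_ge hy
    simp [this, sqrt_eq_zero'.2 hm.le]

theorem volume_setOf_snd_sq_le {g : ℝ → ℝ} (hg : Measurable g) :
    volume {p : ℝ × ℝ | p.2 ^ 2 ≤ g p.1} = ∫⁻ x, ENNReal.ofReal (2 * √(g x)) := by
  rw [Measure.volume_eq_prod, Measure.prod_apply (measurableSet_le (by fun_prop) (by fun_prop))]
  exact lintegral_congr fun x => volume_setOf_sq_le (g x)

theorem volume_setOf_snd_sq_le_eq_intervalIntegral {g : ℝ → ℝ} (hg : Continuous g) {a b : ℝ}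
    (hab : a ≤ b) (hg_nonpos : ∀ x ∉ Icc a b, g x ≤ 0) :
    volume {p : ℝ × ℝ | p.2 ^ 2 ≤ g p.1} = ENNReal.ofReal (∫ x in a..b, 2 * √(g x)) := by
  have hsupp : (fun x => ENNReal.ofReal (2 * √(g x))).support ⊆ Icc a b := fun x hx => by
    by_contra h
    simp [sqrt_eq_zero'.2 (hg_nonpos x h)] at hx
  rw [volume_setOf_snd_sq_le hg.measurable, ← setLIntegral_eq_of_support_subset hsupp,
    ← ofReal_integral_eq_lintegral_ofReal ((by fun_prop : Continuous _).integrableOn_Icc)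
      (.of_forall fun x => by positivity),
    integral_Icc_eq_integral_Ioc, intervalIntegral.integral_of_le hab]

theorem volume_setOf_snd_sq_le_min_eq_lensArea {R₁ R₂ d : ℝ} (hR₁ : 0 < R₁) (hR₂ : 0 < R₂)
    (hlow : |R₁ - R₂| < d) (hhigh : d < R₁ + R₂) :
    volume {p : ℝ × ℝ | p.2 ^ 2 ≤ min (R₁ ^ 2 - p.1 ^ 2) (R₂ ^ 2 - (p.1 - d) ^ 2)}
      = ENNReal.ofReal (lensArea R₁ R₂ d) := by
  have houtside : ∀ x ∉ Icc (d - R₂) R₁, min (R₁ ^ 2 - x ^ 2) (R₂ ^ 2 - (x - d) ^ 2) ≤ 0 := by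
    intro x hx
    rw [mem_Icc, not_and_or, not_le, not_le] at hx
    rcases hx with hx | hx
    · exact (min_le_right _ _).trans (by nlinarith)
    · exact (min_le_left _ _).trans (by nlinarith)
  rw [volume_setOf_snd_sq_le_eq_intervalIntegral (by fun_prop) (by linarith [abs_lt.1 hlow])
    houtside, integral_two_mul_sqrt_min_eq_lensArea hR₁ hR₂ hlow hhigh]

theorem volume_closedBall_inter_closedBall_eq_of_dist_eq {E : Type*} [NormedAddCommGroup E]
    [InnerProductSpace ℝ E] [FiniteDimensional ℝ E] [MeasurableSpace E] [BorelSpace E]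
    {c₁ c₂ c₁' c₂' : E} (h : dist c₁ c₂ = dist c₁' c₂') (R₁ R₂ : ℝ) :
    volume (closedBall c₁ R₁ ∩ closedBall c₂ R₂)
      = volume (closedBall c₁' R₁ ∩ closedBall c₂' R₂) := by
  set T := Submodule.reflection (ℝ ∙ ((c₂ - c₁) - (c₂' - c₁')))ᗮ
  have hT : T (c₂ - c₁) = c₂' - c₁' :=
    Submodule.reflection_sub (by rw [← dist_eq_norm, ← dist_eq_norm, dist_comm, h, dist_comm])
  set f : E → E := fun x => T (x - c₁) + c₁'
  have hf : MeasurePreserving f :=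
    (measurePreserving_add_right volume c₁').comp
      (T.measurePreserving.comp (measurePreserving_sub_right volume c₁))
  have hpre :
      f ⁻¹' (closedBall c₁' R₁ ∩ closedBall c₂' R₂) = closedBall c₁ R₁ ∩ closedBall c₂ R₂ := by
    ext x
    have h₁ : dist (f x) c₁' = dist x c₁ := by
      simp only [f, dist_eq_norm, add_sub_cancel_right, T.norm_map]
    have h₂ : dist (f x) c₂' = dist x c₂ := by
      simp only [f, dist_eq_norm]
      rw [show T (x - c₁) + c₁' - c₂' = T (x - c₁) - (c₂' - c₁') by abel, ← hT, ← map_sub,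
        T.norm_map, sub_sub_sub_cancel_right]
    simp [h₁, h₂]
  rw [← hpre, hf.measure_preimage
    (measurableSet_closedBall.inter measurableSet_closedBall).nullMeasurableSet]

theorem EuclideanSpace.dist_sq_eq_fin_two (x y : EuclideanSpace ℝ (Fin 2)) :
    dist x y ^ 2 = (x 0 - y 0) ^ 2 + (x 1 - y 1) ^ 2 := by
  simp [EuclideanSpace.dist_sq_eq, Fin.sum_univ_two, Real.dist_eq]

theorem volume_closedBall_zero_inter_closedBall_single {R₁ R₂ : ℝ} (hR₁ : 0 ≤ R₁) (hR₂ : 0 ≤ R₂)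
    (d : ℝ) :
    volume (closedBall (0 : EuclideanSpace ℝ (Fin 2)) R₁
        ∩ closedBall (EuclideanSpace.single 0 d) R₂)
      = volume {p : ℝ × ℝ | p.2 ^ 2 ≤ min (R₁ ^ 2 - p.1 ^ 2) (R₂ ^ 2 - (p.1 - d) ^ 2)} := by
  have hψ :
      MeasurePreserving (MeasurableEquiv.finTwoArrow ∘ WithLp.ofLp (p := 2) (V := Fin 2 → ℝ)) :=
    (volume_preserving_finTwoArrow ℝ).comp (PiLp.volume_preserving_ofLp (Fin 2))
  rw [← hψ.measure_preimage (measurableSet_le (by fun_prop) (by fun_prop)).nullMeasurableSet]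
  congr 1
  ext x
  simp only [mem_inter_iff, mem_closedBall, mem_preimage, mem_ofPred_eq, Function.comp_apply,
    MeasurableEquiv.finTwoArrow_apply, le_min_iff,
    ← pow_le_pow_iff_left₀ dist_nonneg hR₁ two_ne_zero,
    ← pow_le_pow_iff_left₀ dist_nonneg hR₂ two_ne_zero, EuclideanSpace.dist_sq_eq_fin_two,
    PiLp.zero_apply, sub_zero, PiLp.single_eq_same, PiLp.single_eq_of_ne, ne_eq, one_ne_zero,
    not_false_eq_true, le_sub_iff_add_le']

/-- Area of the lens formed by two intersecting discs in the plane: if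
`|R₁ - R₂| < dist c₁ c₂ < R₁ + R₂` then the area of the intersection of the closed discs
`B(c₁, R₁)` and `B(c₂, R₂)` equals
`R₁² arccos((d² + R₁² - R₂²)/(2 d R₁)) + R₂² arccos((d² + R₂² - R₁²)/(2 d R₂))
  - (1/2)√((-d+R₁+R₂)(d+R₁-R₂)(d-R₁+R₂)(d+R₁+R₂))`. -/
theorem lens_area
    (R₁ R₂ : ℝ) (hR₁ : 0 < R₁) (hR₂ : 0 < R₂)
    (c₁ c₂ : EuclideanSpace ℝ (Fin 2))
    (hlow : |R₁ - R₂| < dist c₁ c₂) (hhigh : dist c₁ c₂ < R₁ + R₂) :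
    volume (Metric.closedBall c₁ R₁ ∩ Metric.closedBall c₂ R₂)
      = ENNReal.ofReal
          (R₁ ^ 2 * Real.arccos ((dist c₁ c₂ ^ 2 + R₁ ^ 2 - R₂ ^ 2) / (2 * dist c₁ c₂ * R₁))
            + R₂ ^ 2 * Real.arccos ((dist c₁ c₂ ^ 2 + R₂ ^ 2 - R₁ ^ 2) / (2 * dist c₁ c₂ * R₂))
            - (1 / 2) * Real.sqrt ((-dist c₁ c₂ + R₁ + R₂) * (dist c₁ c₂ + R₁ - R₂)
                * (dist c₁ c₂ - R₁ + R₂) * (dist c₁ c₂ + R₁ + R₂))) := by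
  have hd : 0 < dist c₁ c₂ := (abs_nonneg _).trans_lt hlow
  have hdist : dist c₁ c₂ = dist 0 (EuclideanSpace.single (0 : Fin 2) (dist c₁ c₂)) := by
    simp [abs_of_pos hd]
  rw [volume_closedBall_inter_closedBall_eq_of_dist_eq hdist,
    volume_closedBall_zero_inter_closedBall_single hR₁.le hR₂.le,
    volume_setOf_snd_sq_le_min_eq_lensArea hR₁ hR₂ hlow hhigh]
  rfl
end

section
/- Let α > 2, s > 0 and R > 0 be reals. Then the integral over the region {z ∈ ℝ² : ‖z‖ > R} (with respect to two-dimensional Lebesgue measure) of the function z ↦ 1 − 1/(1 + s·‖z‖^{−α}) equals π·s^{2/α}·∫_{R²·s^{−2/α}}^∞ 1/(1 + t^{α/2}) dt. In particular, taking s = T·R^{α} for T > 0, the integral equals π·R²·T^{2/α}·∫_{T^{−2/α}}^∞ 1/(1 + t^{α/2}) dt. (This is the integral appearing in the exponents of the macro-cell coverage probability F(Φ_m, Φ_s) in Lemmas 2 and 4, arising from the probability generating functional of the interfering tier restricted to the complement of the exclusion disc.) -/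
open Real MeasureTheory Set

/-! In polar coordinates the integral becomes `2π ∫_R^∞ r / (1 + r^α / s) dr`, and the
substitution `t = r² s^{-2/α}` turns this into `π s^{2/α} ∫ 1 / (1 + t^{α/2}) dt`.
Both changes of variables are identities of Bochner integrals, valid without any
integrability. The second formula is the first one at `s = T R^α`. -/

section

variable {E : Type*} [NormedAddCommGroup E] [NormedSpace ℝ E]

theorem setIntegral_lt_norm_fin_two (g : ℝ → E) {R : ℝ} (hR : 0 ≤ R) :
    ∫ z in {z : EuclideanSpace ℝ (Fin 2) | R < ‖z‖}, g ‖z‖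
      = (2 * π) • ∫ r in Ioi R, r • g r := by
  have hradial := integral_fun_norm_addHaar (volume : Measure (EuclideanSpace ℝ (Fin 2)))
    ((Ioi R).indicator g)
  have hball : volume.real (Metric.ball (0 : EuclideanSpace ℝ (Fin 2)) 1) = π := by
    simp [measureReal_def, pi_nonneg]
  rw [finrank_euclideanSpace_fin, hball] at hradial
  rw [← integral_indicator (measurableSet_lt measurable_const measurable_norm)]
  change ∫ z, (norm ⁻¹' Ioi R).indicator (g ∘ norm) z = _
  simp_rw [indicator_comp_right]
  rw [hradial, ← Nat.cast_smul_eq_nsmul ℝ, smul_smul, Nat.cast_ofNat, Nat.add_one_sub_one]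
  simp_rw [pow_one, ← indicator_smul_apply (Ioi R) (fun r ↦ r) g]
  rw [setIntegral_indicator measurableSet_Ioi, Ioi_inter_Ioi, sup_of_le_right hR]

theorem integral_Ioi_eq_smul_integral_comp_sq_mul (g : ℝ → E) {R c : ℝ} (hR : 0 ≤ R)
    (hc : 0 < c) :
    ∫ t in Ioi (R ^ 2 * c), g t = (2 * c) • ∫ y in Ioi R, y • g (y ^ 2 * c) := by
  have hsqrt : (R ^ 2) ^ (2⁻¹ : ℝ) = R := by simpa using pow_rpow_inv_natCast hR two_ne_zero
  have hintegrand : ∀ y ∈ Ioi R,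
      (2 * y ^ ((2 : ℝ) - 1)) • g (y ^ (2 : ℝ) * c) = (2 : ℝ) • y • g (y ^ 2 * c) := by
    intro y _
    norm_num [rpow_two, mul_smul]
  rw [← integral_comp_mul_right_Ioi' g _ hc,
    ← integral_comp_rpow_Ioi_of_pos' two_pos (sq_nonneg R), hsqrt,
    setIntegral_congr_fun measurableSet_Ioi hintegrand, integral_smul, smul_smul, mul_comm]

end

theorem rpow_sq_mul_rpow_neg_two_div {y s α : ℝ} (hy : 0 ≤ y) (hs : 0 < s) (hα : α ≠ 0) :
    (y ^ 2 * s ^ (-(2 / α))) ^ (α / 2) = y ^ α / s := by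
  rw [mul_rpow (by positivity) (by positivity), ← rpow_two, ← rpow_mul hy,
    ← rpow_mul hs.le, div_eq_mul_inv _ s, ← rpow_neg_one s]
  congr 2 <;> field_simp

theorem one_sub_one_div_one_add_mul_rpow_neg {y s α : ℝ} (hy : 0 < y) (hs : 0 < s) :
    1 - 1 / (1 + s * y ^ (-α)) = 1 / (1 + y ^ α / s) := by
  have hyα : 0 < y ^ α := rpow_pos_of_pos hy α
  rw [rpow_neg hy.le]
  field_simp
  ring

theorem mul_rpow_rpow_two_div {T R α : ℝ} (hT : 0 ≤ T) (hR : 0 ≤ R) (hα : α ≠ 0) :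
    (T * R ^ α) ^ (2 / α) = T ^ (2 / α) * R ^ 2 := by
  rw [mul_rpow hT (by positivity), ← rpow_mul hR, mul_div_cancel₀ _ hα, rpow_two]

theorem setIntegral_lt_norm_one_sub_one_div_one_add_mul_rpow_neg {α s R : ℝ} (hα : α ≠ 0)
    (hs : 0 < s) (hR : 0 ≤ R) :
    ∫ z in {z : EuclideanSpace ℝ (Fin 2) | R < ‖z‖}, (1 - 1 / (1 + s * ‖z‖ ^ (-α)))
      = π * s ^ (2 / α) * ∫ t in Ioi (R ^ 2 * s ^ (-(2 / α))), 1 / (1 + t ^ (α / 2)) := by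
  have hintegrand : ∀ y ∈ Ioi R, y * (1 - 1 / (1 + s * y ^ (-α)))
      = y * (1 / (1 + (y ^ 2 * s ^ (-(2 / α))) ^ (α / 2))) := by
    intro y hRy
    have hy : 0 < y := hR.trans_lt hRy
    rw [one_sub_one_div_one_add_mul_rpow_neg hy hs, rpow_sq_mul_rpow_neg_two_div hy.le hs hα]
  have hscale : s ^ (2 / α) * s ^ (-(2 / α)) = 1 := by
    rw [← rpow_add hs, add_neg_cancel, rpow_zero]
  rw [setIntegral_lt_norm_fin_two (fun y ↦ 1 - 1 / (1 + s * y ^ (-α))) hR,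
    integral_Ioi_eq_smul_integral_comp_sq_mul _ hR (rpow_pos_of_pos hs _)]
  simp only [smul_eq_mul]
  rw [setIntegral_congr_fun measurableSet_Ioi hintegrand]
  linear_combination
    (-2 * π * ∫ y in Ioi R, y * (1 / (1 + (y ^ 2 * s ^ (-(2 / α))) ^ (α / 2)))) * hscale

/-- Interference functional integral outside an exclusion disc: for `α > 2`, `s > 0`, `R > 0`,
`∫_{‖z‖ > R} (1 - 1/(1 + s ‖z‖^{-α})) dz = π s^{2/α} ∫_{R² s^{-2/α}}^∞ 1/(1 + t^{α/2}) dt`,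
and in particular, with `s = T R^α` for `T > 0`, it equals
`π R² T^{2/α} ∫_{T^{-2/α}}^∞ 1/(1 + t^{α/2}) dt`. -/
theorem interference_integral_outside_disc
    (α : ℝ) (hα : 2 < α) :
    (∀ s R : ℝ, 0 < s → 0 < R →
      ∫ z in {z : EuclideanSpace ℝ (Fin 2) | R < ‖z‖},
          (1 - 1 / (1 + s * ‖z‖ ^ (-α)))
        = π * s ^ (2 / α) * ∫ t in Set.Ioi (R ^ 2 * s ^ (-(2 / α))), 1 / (1 + t ^ (α / 2)))
    ∧ (∀ T R : ℝ, 0 < T → 0 < R →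
      ∫ z in {z : EuclideanSpace ℝ (Fin 2) | R < ‖z‖},
          (1 - 1 / (1 + (T * R ^ α) * ‖z‖ ^ (-α)))
        = π * R ^ 2 * T ^ (2 / α) * ∫ t in Set.Ioi (T ^ (-(2 / α))), 1 / (1 + t ^ (α / 2))) := by
  have hα0 : α ≠ 0 := by positivity
  refine ⟨fun s R hs hR ↦ setIntegral_lt_norm_one_sub_one_div_one_add_mul_rpow_neg hα0 hs hR.le,
    fun T R hT hR ↦ ?_⟩
  have hscale := mul_rpow_rpow_two_div hT.le hR.le hα0
  have hlower : R ^ 2 * (T * R ^ α) ^ (-(2 / α)) = T ^ (-(2 / α)) := by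
    rw [rpow_neg (by positivity), hscale, rpow_neg hT.le]
    field_simp
  rw [setIntegral_lt_norm_one_sub_one_div_one_add_mul_rpow_neg hα0 (by positivity) hR.le,
    hscale, hlower]
  ring
end
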